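/- Let r ≥ 3 be an ODD integer. Then for any n ≥ r-1 and any A > 0, there exists f ∈ C^r which is identically 0 on [-1, -1/2] and nonnegative on I, such that for every polynomial P_n of degree ≤ n which is nonnegative on [-1/2, 1/2] and satisfies P_n^(i)(0) = f^(i)(0) for all 0 ≤ i ≤ r-1, one has ‖f - P_n‖ > A ‖f^(r)‖. Hence positive polynomial approximation with Hermite interpolation of order r-1 at an interior point is impossible for odd r ≥ 3. -/

import Mathlib

/-!
Write `r = 2m + 1`. The function `spike m h` is a bump of height `h²` supported in `[-h, h]` which
near `0` equals `h² (1 - (x/h)^(2m))`, so `‖f^(r)‖ = O(h^(1-2m))`. A polynomial `P` with the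
prescribed jet at `0` has the coefficients `h²` and `-h^(2-2m)` in degrees `0` and `2m` and no
other coefficient below degree `r`. Nonnegativity of `P` at `±2h` then forces some higher
coefficient to be of size `h^(-2m)`. Since `f = 0` on `[1/4, 1/2]`, all coefficients of `P` are
bounded by a multiple of `‖f - P‖`, so `‖f - P‖ ≳ h^(-2m)`, which beats `A ‖f^(r)‖` for small `h`.
-/

/-- The sup norm of `g` on `[a,b]`. -/
noncomputable def supNorm (g : ℝ → ℝ) (a b : ℝ) : ℝ :=
  sSup ((fun x => |g x|) '' Set.Icc a b)

open Set
open scoped ContDiff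

theorem abs_le_supNorm {g : ℝ → ℝ} {a b x : ℝ} (hg : ContinuousOn g (Icc a b))
    (hx : x ∈ Icc a b) : |g x| ≤ supNorm g a b :=
  le_csSup (isCompact_Icc.image_of_continuousOn hg.abs).bddAbove (mem_image_of_mem _ hx)

theorem supNorm_le {g : ℝ → ℝ} {a b C : ℝ} (hab : a ≤ b) (hC : ∀ x ∈ Icc a b, |g x| ≤ C) :
    supNorm g a b ≤ C :=
  csSup_le ((nonempty_Icc.2 hab).image _) (forall_mem_image.2 hC)

namespace Polynomial

theorem iteratedDeriv_eval (Q : ℝ[X]) (k : ℕ) :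
    iteratedDeriv k (fun x => Q.eval x) = fun x => (derivative^[k] Q).eval x := by
  induction k with
  | zero => simp
  | succ k ih =>
    rw [iteratedDeriv_succ, ih]
    funext x
    rw [Function.iterate_succ_apply']
    exact Polynomial.deriv _

theorem eval_zero_iterate_derivative {R : Type*} [Semiring R] (Q : R[X]) (k : ℕ) :
    (derivative^[k] Q).eval 0 = k.factorial * Q.coeff k := by
  rw [← coeff_zero_eq_eval_zero, coeff_iterate_derivative, zero_add, Nat.descFactorial_self,
    nsmul_eq_mul]

/-- Writing `P` as its Lagrange interpolant at `n + 1` fixed nodes of `s` bounds every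
coefficient by a fixed multiple of `sup_{s} |P|`. -/
theorem exists_abs_coeff_le_of_abs_eval_le {s : Set ℝ} (hs : s.Infinite) (n : ℕ) :
    ∃ C : ℝ, 0 ≤ C ∧ ∀ P : ℝ[X], P.natDegree ≤ n → ∀ M : ℝ,
      (∀ x ∈ s, |P.eval x| ≤ M) → ∀ i, |P.coeff i| ≤ C * M := by
  classical
  obtain ⟨t, hts, htcard⟩ := hs.exists_subset_card_eq (n + 1)
  set L : ℝ → ℝ[X] := Lagrange.basis t id
  refine ⟨∑ i ∈ Finset.range (n + 1), ∑ x ∈ t, |(L x).coeff i|, by positivity, ?_⟩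
  intro P hP M hM i
  obtain ⟨x₀, hx₀⟩ : t.Nonempty := Finset.card_pos.1 (by omega)
  have hM0 : 0 ≤ M := (abs_nonneg _).trans (hM x₀ (hts hx₀))
  by_cases hi : n < i
  · rw [coeff_eq_zero_of_natDegree_lt (hP.trans_lt hi), abs_zero]
    positivity
  have hdeg : P.degree < t.card := by
    rw [htcard]
    exact (degree_le_natDegree.trans (WithBot.coe_le_coe.2 hP)).trans_lt
      (WithBot.coe_lt_coe.2 n.lt_succ_self)
  have hcoeff : P.coeff i = ∑ x ∈ t, P.eval x * (L x).coeff i := by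
    conv_lhs => rw [Lagrange.eq_interpolate (v := id) (injOn_id _) hdeg]
    simp [Lagrange.interpolate_apply, coeff_C_mul, L]
  calc |P.coeff i| ≤ ∑ x ∈ t, |P.eval x| * |(L x).coeff i| := by
        rw [hcoeff]
        exact (Finset.abs_sum_le_sum_abs _ _).trans_eq (by simp only [abs_mul])
    _ ≤ ∑ x ∈ t, M * |(L x).coeff i| :=
        Finset.sum_le_sum fun x hx => mul_le_mul_of_nonneg_right (hM x (hts hx)) (abs_nonneg _)
    _ = (∑ x ∈ t, |(L x).coeff i|) * M := by rw [← Finset.mul_sum, mul_comm]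
    _ ≤ _ := by
        gcongr
        exact Finset.single_le_sum (f := fun i => ∑ x ∈ t, |(L x).coeff i|)
          (fun _ _ => by positivity) (Finset.mem_range.2 (by omega))

/-- Odd powers cancel in `T x + T (-x)`, so only the even coefficients below `k` need vanish. -/
theorem abs_eval_add_eval_neg_le {T : ℝ[X]} {n k : ℕ} {K x : ℝ} (hdeg : T.natDegree ≤ n)
    (hlow : ∀ i < k, Even i → T.coeff i = 0) (hK : ∀ i, |T.coeff i| ≤ K) (hx : |x| ≤ 1) :
    |T.eval x + T.eval (-x)| ≤ 2 * (n + 1) * K * |x| ^ k := by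
  have hK0 : 0 ≤ K := (abs_nonneg _).trans (hK 0)
  have hsum : T.eval x + T.eval (-x) =
      ∑ i ∈ Finset.range (n + 1), T.coeff i * (x ^ i + (-x) ^ i) := by
    rw [eval_eq_sum_range' (Nat.lt_succ_of_le hdeg), eval_eq_sum_range' (Nat.lt_succ_of_le hdeg),
      ← Finset.sum_add_distrib]
    simp only [mul_add]
  have hterm : ∀ i, |T.coeff i * (x ^ i + (-x) ^ i)| ≤ 2 * K * |x| ^ k := by
    intro i
    rcases lt_or_ge i k with hik | hki
    · rcases Nat.even_or_odd i with he | ho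
      · simp only [hlow i hik he, zero_mul, abs_zero]
        positivity
      · simp only [ho.neg_pow, add_neg_cancel, mul_zero, abs_zero]
        positivity
    · calc |T.coeff i * (x ^ i + (-x) ^ i)| ≤ K * (2 * |x| ^ i) := by
            rw [abs_mul]
            refine mul_le_mul (hK i) ((abs_add_le _ _).trans_eq ?_) (abs_nonneg _) hK0
            rw [abs_pow, abs_pow, abs_neg]
            ring
        _ ≤ K * (2 * |x| ^ k) := by
            have := pow_le_pow_of_le_one (abs_nonneg x) hx hki
            gcongr
        _ = 2 * K * |x| ^ k := by ring
  rw [hsum]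
  calc _ ≤ ∑ i ∈ Finset.range (n + 1), |T.coeff i * (x ^ i + (-x) ^ i)| :=
        Finset.abs_sum_le_sum_abs _ _
    _ ≤ ∑ _i ∈ Finset.range (n + 1), 2 * K * |x| ^ k := Finset.sum_le_sum fun i _ => hterm i
    _ = _ := by
        rw [Finset.sum_const, Finset.card_range, nsmul_eq_mul]
        push_cast
        ring

end Polynomial

theorem ContDiff.exists_abs_iteratedDeriv_le {g : ℝ → ℝ} (hg : ContDiff ℝ ∞ g)
    (hsupp : HasCompactSupport g) (k : ℕ) : ∃ C, ∀ t, |iteratedDeriv k g t| ≤ C :=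
  (hg.continuous_iteratedDeriv k (by exact_mod_cast le_top)).bounded_above_of_compact_support
    ((hsupp.iteratedFDeriv (𝕜 := ℝ) k).comp_left
      (g := fun L : ContinuousMultilinearMap ℝ (fun _ : Fin k => ℝ) ℝ => L fun _ => 1) rfl)

section Spike

open Polynomial

/-- Equal to `1` on `[-1/2, 1/2]` and to `0` outside `(-1, 1)`. -/
noncomputable def plateau : ContDiffBump (0 : ℝ) := ⟨1 / 2, 1, by norm_num, by norm_num⟩

noncomputable def spikeProfile (m : ℕ) (t : ℝ) : ℝ := (1 - t ^ (2 * m)) * plateau t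

noncomputable def spike (m : ℕ) (h x : ℝ) : ℝ := h ^ 2 * spikeProfile m (h⁻¹ * x)

noncomputable def spikeJet (m : ℕ) (h : ℝ) : ℝ[X] :=
  C (h ^ 2) - C (h ^ 2 * h⁻¹ ^ (2 * m)) * X ^ (2 * m)

variable {m : ℕ} {h x : ℝ}

theorem contDiff_spikeProfile (m : ℕ) : ContDiff ℝ ∞ (spikeProfile m) :=
  (contDiff_const.sub (contDiff_id.pow _)).mul plateau.contDiff

theorem hasCompactSupport_spikeProfile (m : ℕ) : HasCompactSupport (spikeProfile m) :=
  plateau.hasCompactSupport.mul_left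

theorem spikeProfile_eq_zero {t : ℝ} (ht : 1 ≤ |t|) : spikeProfile m t = 0 := by
  rw [spikeProfile, plateau.zero_of_le_dist (by rw [Real.dist_eq, sub_zero]; exact ht), mul_zero]

theorem spikeProfile_nonneg (m : ℕ) (t : ℝ) : 0 ≤ spikeProfile m t := by
  rcases le_or_gt 1 |t| with ht | ht
  · rw [spikeProfile_eq_zero ht]
  · refine mul_nonneg (sub_nonneg.2 ?_) plateau.nonneg
    calc t ^ (2 * m) = |t| ^ (2 * m) := by rw [pow_mul, pow_mul, sq_abs]
      _ ≤ 1 := pow_le_one₀ (abs_nonneg t) ht.le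

theorem contDiff_spike (m : ℕ) (h : ℝ) : ContDiff ℝ ∞ (spike m h) :=
  contDiff_const.mul ((contDiff_spikeProfile m).comp (contDiff_const.mul contDiff_id))

theorem spike_nonneg (m : ℕ) (h x : ℝ) : 0 ≤ spike m h x :=
  mul_nonneg (sq_nonneg h) (spikeProfile_nonneg m _)

theorem spike_eq_zero (hh : 0 < h) (hx : h ≤ |x|) : spike m h x = 0 := by
  rw [spike, spikeProfile_eq_zero, mul_zero]
  rw [abs_mul, abs_inv, abs_of_pos hh, inv_mul_eq_div]
  exact (one_le_div hh).2 hx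

theorem spike_eq_eval_spikeJet (hh : 0 < h) (hx : |x| ≤ h / 2) :
    spike m h x = (spikeJet m h).eval x := by
  have hmem : h⁻¹ * x ∈ Metric.closedBall (0 : ℝ) plateau.rIn := by
    rw [Metric.mem_closedBall, Real.dist_eq, sub_zero, abs_mul, abs_inv, abs_of_pos hh,
      inv_mul_le_iff₀ hh]
    change |x| ≤ h * (1 / 2)
    linarith
  rw [spike, spikeProfile, plateau.one_of_mem_closedBall hmem, spikeJet]
  simp only [eval_sub, eval_mul, eval_C, eval_pow, eval_X]
  ring

theorem iteratedDeriv_spike_zero (hh : 0 < h) (k : ℕ) :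
    iteratedDeriv k (spike m h) 0 = k.factorial * (spikeJet m h).coeff k := by
  have hnear : spike m h =ᶠ[nhds 0] fun x => (spikeJet m h).eval x := by
    filter_upwards [Metric.ball_mem_nhds (0 : ℝ) (half_pos hh)] with x hx
    rw [Metric.mem_ball, Real.dist_eq, sub_zero] at hx
    exact spike_eq_eval_spikeJet hh hx.le
  rw [hnear.iteratedDeriv_eq, iteratedDeriv_eval]
  exact eval_zero_iterate_derivative _ _

theorem iteratedDerivWithin_Icc_spike {a b : ℝ} (hab : a < b) (k : ℕ) (hx : x ∈ Icc a b) :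
    iteratedDerivWithin k (spike m h) (Icc a b) x = iteratedDeriv k (spike m h) x :=
  iteratedDerivWithin_eq_iteratedDeriv (uniqueDiffOn_Icc hab)
    (contDiff_infty.1 (contDiff_spike m h) k).contDiffAt hx

theorem supNorm_iteratedDerivWithin_spike_le {k : ℕ} {C : ℝ}
    (hC : ∀ t, |iteratedDeriv k (spikeProfile m) t| ≤ C) (hh : 0 < h) :
    supNorm (iteratedDerivWithin k (spike m h) (Icc (-1) 1)) (-1) 1 ≤ C * h ^ 2 * h⁻¹ ^ k := by
  refine supNorm_le (by norm_num) fun x hx => ?_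
  rw [iteratedDerivWithin_Icc_spike (by norm_num) k hx]
  change |iteratedDeriv k (fun x => h ^ 2 * spikeProfile m (h⁻¹ * x)) x| ≤ _
  rw [iteratedDeriv_const_mul_field,
    iteratedDeriv_comp_const_mul (contDiff_infty.1 (contDiff_spikeProfile m) k), abs_mul, abs_mul,
    abs_of_pos (by positivity : 0 < h ^ 2), abs_of_pos (by positivity : 0 < h⁻¹ ^ k)]
  calc h ^ 2 * (h⁻¹ ^ k * |iteratedDeriv k (spikeProfile m) (h⁻¹ * x)|)
      ≤ h ^ 2 * (h⁻¹ ^ k * C) := by gcongr; exact hC _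
    _ = C * h ^ 2 * h⁻¹ ^ k := by ring

theorem abs_eval_le_supNorm_sub_spike (hh : 0 < h) (hh4 : h ≤ 1 / 4) (P : ℝ[X]) :
    ∀ x ∈ Icc (1 / 4 : ℝ) (1 / 2),
      |P.eval x| ≤ supNorm (fun x => spike m h x - P.eval x) (-1) 1 := by
  intro x hx
  have hcont : ContinuousOn (fun x => spike m h x - P.eval x) (Icc (-1) 1) :=
    ((contDiff_spike m h).continuous.sub P.continuous).continuousOn
  have hfx := abs_le_supNorm hcont (x := x) ⟨by linarith [hx.1], by linarith [hx.2]⟩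
  rwa [spike_eq_zero hh (by rw [abs_of_pos (by linarith [hx.1])]; linarith [hx.1]), zero_sub,
    abs_neg] at hfx

theorem coeff_eq_coeff_spikeJet (hh : 0 < h) {P : ℝ[X]} {k : ℕ}
    (hjet : ∀ i ≤ k,
      (derivative^[i] P).eval 0 = iteratedDerivWithin i (spike m h) (Icc (-1) 1) 0) :
    ∀ i ≤ k, P.coeff i = (spikeJet m h).coeff i := by
  intro i hi
  have := hjet i hi
  rw [iteratedDerivWithin_Icc_spike (by norm_num) i (by norm_num), iteratedDeriv_spike_zero hh,
    eval_zero_iterate_derivative] at this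
  exact mul_left_cancel₀ (by positivity) this

theorem natDegree_spikeJet_le (m : ℕ) (h : ℝ) : (spikeJet m h).natDegree ≤ 2 * m :=
  (natDegree_sub_le _ _).trans (max_le (by simp) (natDegree_C_mul_X_pow_le _ _))

theorem eval_spikeJet_two_mul (hh : 0 < h) :
    (spikeJet m h).eval (2 * h) = h ^ 2 * (1 - 2 ^ (2 * m)) := by
  have hcancel : h⁻¹ ^ (2 * m) * h ^ (2 * m) = 1 := by
    rw [← mul_pow, inv_mul_cancel₀ hh.ne', one_pow]
  simp only [spikeJet, eval_sub, eval_mul, eval_C, eval_pow, eval_X]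
  linear_combination (-(h ^ 2 * 2 ^ (2 * m))) * hcancel

theorem eval_spikeJet_neg (m : ℕ) (h x : ℝ) :
    (spikeJet m h).eval (-x) = (spikeJet m h).eval x := by
  simp [spikeJet, pow_mul]

/-- Comparing `P` with `spikeJet` at `±2h`: the jet contributes `2h²(1 - 2^(2m)) ≤ -6h²`, while
the remainder has no even coefficients below `2m + 2` (the odd one at `2m + 1 = r` cancels), so it
is `O(K h^(2m+2))`. -/
theorem three_le_of_coeff_eq_spikeJet {n : ℕ} {K : ℝ} (hm : 1 ≤ m) (hmn : 2 * m ≤ n)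
    (hh : 0 < h) (hh1 : 2 * h ≤ 1) {P : ℝ[X]} (hdeg : P.natDegree ≤ n)
    (hpos : 0 ≤ P.eval (2 * h)) (hneg : 0 ≤ P.eval (-(2 * h)))
    (hjet : ∀ i ≤ 2 * m, P.coeff i = (spikeJet m h).coeff i) (hK : ∀ i, |P.coeff i| ≤ K) :
    3 ≤ (n + 1) * K * 2 ^ (2 * m + 2) * h ^ (2 * m) := by
  set T := P - spikeJet m h
  have hTdeg : T.natDegree ≤ n :=
    (natDegree_sub_le _ _).trans (max_le hdeg ((natDegree_spikeJet_le m h).trans hmn))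
  have hTlow : ∀ i < 2 * m + 2, Even i → T.coeff i = 0 := by
    rintro i hi ⟨j, rfl⟩
    rw [coeff_sub, hjet _ (by omega), sub_self]
  have hTK : ∀ i, |T.coeff i| ≤ K := by
    intro i
    by_cases hi : i ≤ 2 * m
    · rw [coeff_sub, hjet i hi, sub_self, abs_zero]
      exact (abs_nonneg _).trans (hK 0)
    · rw [coeff_sub, coeff_eq_zero_of_natDegree_lt
        ((natDegree_spikeJet_le m h).trans_lt (not_le.1 hi)), sub_zero]
      exact hK i
  have hT := abs_eval_add_eval_neg_le hTdeg hTlow hTK (x := 2 * h)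
    (by rwa [abs_of_pos (by positivity)])
  have hsplit : P.eval (2 * h) + P.eval (-(2 * h)) =
      2 * (h ^ 2 * (1 - 2 ^ (2 * m))) + (T.eval (2 * h) + T.eval (-(2 * h))) := by
    simp only [T, eval_sub, eval_spikeJet_neg, eval_spikeJet_two_mul hh]
    ring
  have hfour : (4 : ℝ) ≤ 2 ^ (2 * m) :=
    calc (4 : ℝ) = 2 ^ 2 := by norm_num
      _ ≤ 2 ^ (2 * m) := pow_le_pow_right₀ (by norm_num) (by omega)
  have hpow : |2 * h| ^ (2 * m + 2) = h ^ 2 * (2 ^ (2 * m + 2) * h ^ (2 * m)) := by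
    rw [abs_of_pos (by positivity)]
    ring
  have hmain : h ^ 2 * 3 ≤ h ^ 2 * ((n + 1) * K * 2 ^ (2 * m + 2) * h ^ (2 * m)) := by
    have := le_abs_self (T.eval (2 * h) + T.eval (-(2 * h)))
    rw [hpow] at hT
    nlinarith [sq_nonneg h]
  exact le_of_mul_le_mul_left hmain (by positivity)

end Spike

/-- Copositive approximation with interpolatory constraints, negative result for
`f ∈ C^r` with odd `r ≥ 3`: for any `n ≥ r - 1` and `A > 0`, there is `f ∈ C^r[-1,1]`,
vanishing on `[-1,-1/2]` and nonnegative on `[-1,1]`, such that any polynomial of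
degree ≤ n, nonnegative on `[-1/2,1/2]`, with `P_n^{(i)}(0) = f^{(i)}(0)` for
`0 ≤ i ≤ r - 1`, satisfies `‖f - P_n‖ > A ‖f^{(r)}‖`. -/
theorem statement12 (r : ℕ) (hr : 3 ≤ r) (hro : Odd r) (n : ℕ) (hn : r - 1 ≤ n)
    (A : ℝ) (hA : 0 < A) :
    ∃ f : ℝ → ℝ, ContDiffOn ℝ r f (Set.Icc (-1 : ℝ) 1) ∧
      (∀ x ∈ Set.Icc (-1 : ℝ) (-1/2 : ℝ), f x = 0) ∧
      (∀ x ∈ Set.Icc (-1 : ℝ) 1, 0 ≤ f x) ∧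
      ∀ P : Polynomial ℝ, P.natDegree ≤ n →
        (∀ x ∈ Set.Icc (-1/2 : ℝ) (1/2 : ℝ), 0 ≤ P.eval x) →
        (∀ i : ℕ, i ≤ r - 1 → (Polynomial.derivative^[i] P).eval 0
            = iteratedDerivWithin i f (Set.Icc (-1 : ℝ) 1) 0) →
        A * supNorm (iteratedDerivWithin r f (Set.Icc (-1 : ℝ) 1)) (-1) 1
          < supNorm (fun x => f x - P.eval x) (-1) 1 := by
  obtain ⟨m, rfl⟩ := hro
  obtain ⟨K, hK0, hK⟩ := Polynomial.exists_abs_coeff_le_of_abs_eval_le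
    (Icc_infinite (by norm_num : (1 / 4 : ℝ) < 1 / 2)) n
  obtain ⟨C₀, hC₀⟩ := (contDiff_spikeProfile m).exists_abs_iteratedDeriv_le
    (hasCompactSupport_spikeProfile m) (2 * m + 1)
  set D : ℝ := (n + 1) * K * 2 ^ (2 * m + 2)
  obtain ⟨h, ⟨hh8, hsmall⟩, hh⟩ : ∃ h : ℝ, (h ≤ 1 / 8 ∧ A * C₀ * D * h < 3) ∧ 0 < h := by
    have hnear : ∀ᶠ h in nhds (0 : ℝ), h ≤ 1 / 8 ∧ A * C₀ * D * h < 3 :=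
      (eventually_le_nhds (by norm_num)).and <| (continuous_const_mul (A * C₀ * D)).tendsto' 0 0
        (mul_zero _) |>.eventually (gt_mem_nhds (by norm_num))
    exact ((hnear.filter_mono nhdsWithin_le_nhds).and self_mem_nhdsWithin).exists
      (f := nhdsWithin 0 (Ioi 0))
  refine ⟨spike m h, (contDiff_infty.1 (contDiff_spike m h) _).contDiffOn,
    fun x hx => spike_eq_zero hh ?_, fun x _ => spike_nonneg m h x, fun P hdeg hpos hjet => ?_⟩
  · rw [abs_of_neg (by linarith [hx.2])]
    linarith [hx.2]
  set M := supNorm (fun x => spike m h x - P.eval x) (-1) 1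
  have hlower : 3 ≤ D * M * h ^ (2 * m) := by
    have := three_le_of_coeff_eq_spikeJet (by omega) (by omega) hh (by linarith) hdeg
      (hpos _ ⟨by linarith, by linarith⟩) (hpos _ ⟨by linarith, by linarith⟩)
      (coeff_eq_coeff_spikeJet hh fun i hi => hjet i (by omega))
      (hK P hdeg M (abs_eval_le_supNorm_sub_spike hh (by linarith) P))
    linarith
  refine (mul_le_mul_of_nonneg_left (supNorm_iteratedDerivWithin_spike_le hC₀ hh) hA.le).trans_lt
    (lt_of_mul_lt_mul_right ?_ (by positivity : 0 ≤ D * h ^ (2 * m)))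
  calc A * (C₀ * h ^ 2 * h⁻¹ ^ (2 * m + 1)) * (D * h ^ (2 * m)) = A * C₀ * D * h := by
        rw [inv_pow]
        field_simp
        ring
    _ < M * (D * h ^ (2 * m)) := by linarith
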